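/- A connected graph N whose vertices all have degree 1 or 3 and whose degree-1 vertices form the set X is tree-based (i.e., has a spanning tree whose leaf set equals X) if and only if for every blob B of N (maximal subgraph with no cut-edge that is not a single vertex), the simple network B_N obtained by taking the union of B with all cut-edges of N incident to B is tree-based. -/

import Mathlib

open SimpleGraph

/-- The Mathlib (Dec 2024) notion of a bridge: an edge of `G` whose removal disconnects
its endpoints. -/
def SimpleGraph.IsBridge' {V : Type*} (G : SimpleGraph V) (e : Sym2 V) : Prop :=
  e ∈ G.edgeSet ∧
    Sym2.lift ⟨fun v w => ¬(G \ fromEdgeSet {e}).Reachable v w, by simp [reachable_comm]⟩ e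

/-- Degree of a vertex (as the cardinality of its neighbour set). -/
noncomputable def deg {W : Type*} (G : SimpleGraph W) (v : W) : ℕ :=
  (G.neighborSet v).ncard

/-- `T` is a support-tree for `G` with leaf set `X`: a spanning tree of `G`
whose leaves (vertices of degree at most 1) are exactly `X`. -/
def IsSupportTree {W : Type*} (G T : SimpleGraph W) (X : Set W) : Prop :=
  T ≤ G ∧ T.IsTree ∧ {v | deg T v ≤ 1} = X

/-- A graph is tree-based on `X` if it has a support-tree with leaf set `X`. -/
def TreeBased {W : Type*} (G : SimpleGraph W) (X : Set W) : Prop :=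
  ∃ T, IsSupportTree G T X

/-- An unrooted phylogenetic network on `X`: a connected graph all of whose
vertices have degree 1 or 3 (allowing the single-vertex convention via `≤ 1`),
whose leaves are exactly `X`. -/
def IsNetwork {W : Type*} (G : SimpleGraph W) (X : Set W) : Prop :=
  G.Connected ∧ (∀ v, deg G v ≤ 1 ∨ deg G v = 3) ∧ {v | deg G v ≤ 1} = X

/-- The cut-edge `{u,v}` induces a split of `X`: each side of the deleted edge
contains an element of `X`. -/
def InducesSplit {W : Type*} (G : SimpleGraph W) (X : Set W) (u v : W) : Prop :=
  (∃ a ∈ X, (G.deleteEdges {s(u, v)}).Reachable u a) ∧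
    ∃ b ∈ X, (G.deleteEdges {s(u, v)}).Reachable v b

/-- A network is proper if every cut-edge induces a split of `X`. -/
def ProperNet {W : Type*} (G : SimpleGraph W) (X : Set W) : Prop :=
  ∀ u v : W, G.IsBridge' s(u, v) → InducesSplit G X u v

/-- A network is simple if every cut-edge is trivial, i.e. has a leaf endpoint. -/
def SimpleNet {W : Type*} (G : SimpleGraph W) (X : Set W) : Prop :=
  ∀ u v : W, G.IsBridge' s(u, v) → u ∈ X ∨ v ∈ X

/-- A graph is bridgeless if it has no cut-edge. -/
def Bridgeless {W : Type*} (H : SimpleGraph W) : Prop :=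
  ∀ e, ¬ H.IsBridge' e

/-- A blob of `G`: a maximal connected subgraph without a cut-edge that is not
a single vertex. -/
def IsBlob {W : Type*} (G : SimpleGraph W) (B : G.Subgraph) : Prop :=
  B.verts.Nontrivial ∧ B.Connected ∧ Bridgeless B.coe ∧
    ∀ B' : G.Subgraph, B'.verts.Nontrivial → B'.Connected → Bridgeless B'.coe →
      B ≤ B' → B = B'

/-- The simple network `B_N` associated to a blob `B`: the union of `B` with
all cut-edges of `G` incident to `B`. -/
def blobNet {W : Type*} (G : SimpleGraph W) (B : G.Subgraph) : G.Subgraph where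
  verts := B.verts ∪ {w | ∃ u ∈ B.verts, G.IsBridge' s(u, w)}
  Adj a b := B.Adj a b ∨ (G.IsBridge' s(a, b) ∧ (a ∈ B.verts ∨ b ∈ B.verts))
  adj_sub := by
    rintro v w (h | ⟨h, -⟩)
    · exact B.adj_sub h
    · exact (SimpleGraph.mem_edgeSet G).mp h.1
  edge_vert := by
    rintro v w (h | ⟨h, hv | hw⟩)
    · exact Or.inl (B.edge_vert h)
    · exact Or.inl hv
    · exact Or.inr ⟨w, hw, by rwa [Sym2.eq_swap]⟩
  symm := ⟨by
    rintro v w (h | ⟨h, hc⟩)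
    · exact Or.inl (B.adj_symm h)
    · exact Or.inr ⟨by rwa [Sym2.eq_swap], hc.symm⟩⟩

/-- The leaf set of `B_N`: endpoints of incident cut-edges not lying in `B`. -/
def blobNetLeaves {W : Type*} (G : SimpleGraph W) (B : G.Subgraph) :
    Set (blobNet G B).verts :=
  {w | (w : W) ∉ B.verts}

/-- `G` is a level-`k` network: at most `k` edges must be removed from each
blob to obtain a tree. -/
def Level {W : Type*} (G : SimpleGraph W) (k : ℕ) : Prop :=
  ∀ B : G.Subgraph, IsBlob G B → B.edgeSet.ncard ≤ B.verts.ncard - 1 + k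
/-- The network `N − x`: delete leaf `x` and its incident edge and suppress the
resulting degree-2 vertex `v` (the former neighbour of `x`). -/
def suppressAdj {V : Type*} (G : SimpleGraph V) (x v : V) :
    SimpleGraph {w : V // w ≠ x ∧ w ≠ v} where
  Adj a b := a ≠ b ∧ (G.Adj a b ∨ (G.Adj v a ∧ G.Adj v b))
  symm := ⟨by
    rintro a b ⟨h1, h2 | ⟨h3, h4⟩⟩
    · exact ⟨h1.symm, Or.inl h2.symm⟩
    · exact ⟨h1.symm, Or.inr ⟨h4, h3⟩⟩⟩
  loopless := ⟨by rintro a ⟨h1, -⟩; exact h1 rfl⟩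

/-- The network `C_e(x,y)`: replace the edge `e = {u,v}` of `C` by a path
`u – w₁ – w₂ – v` and attach pendant leaves `x = Sum.inr 2` to `w₁ = Sum.inr 0`
and `y = Sum.inr 3` to `w₂ = Sum.inr 1`. -/
def extGraph {W : Type*} (C : SimpleGraph W) (u v : W) : SimpleGraph (W ⊕ Fin 4) :=
  SimpleGraph.fromEdgeSet
    ((Sym2.map Sum.inl) '' (C.edgeSet \ {s(u, v)}) ∪
      {s(Sum.inl u, Sum.inr 0), s(Sum.inr 0, Sum.inr 1), s(Sum.inr 1, Sum.inl v),
       s(Sum.inr 0, Sum.inr 2), s(Sum.inr 1, Sum.inr 3)})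

/-- The leaves `x` and `y` of `C_e(x,y)`. -/
def extLeaves (W : Type*) : Set (W ⊕ Fin 4) := {Sum.inr 2, Sum.inr 3}

/-- The Petersen graph, realized as the Kneser graph K(5,2). -/
def petersen : SimpleGraph {s : Finset (Fin 5) // s.card = 2} where
  Adj a b := Disjoint (a : Finset (Fin 5)) (b : Finset (Fin 5))
  symm := ⟨fun a b h => h.symm⟩
  loopless := ⟨fun a h => by
    have h2 : (a : Finset (Fin 5)) = ∅ := by
      simpa using disjoint_self.mp h
    have := a.2
    rw [h2] at this
    simp at this⟩

/-- `D` is an orientation of the edges of `G`. -/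
def IsOrientation {V : Type*} (G : SimpleGraph V) (D : V → V → Prop) : Prop :=
  (∀ u v, G.Adj u v ↔ (D u v ∨ D v u)) ∧ ∀ u v, ¬ (D u v ∧ D v u)

noncomputable def outdeg {α : Type*} (r : α → α → Prop) (v : α) : ℕ := {w | r v w}.ncard
noncomputable def indeg {α : Type*} (r : α → α → Prop) (v : α) : ℕ := {w | r w v}.ncard

/-- A rooted (binary) phylogenetic network with root `ρ` and leaf set `Y`:
a DAG with a unique root of indegree 0 and outdegree 2, leaves (outdegree 0,
indegree 1) exactly `Y`, and all non-root vertices of total degree 1 or 3. -/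
def IsRootedNetwork {α : Type*} (r : α → α → Prop) (ρ : α) (Y : Set α) : Prop :=
  (∀ v, ¬ Relation.TransGen r v v) ∧
  indeg r ρ = 0 ∧ outdeg r ρ = 2 ∧
  (∀ v, indeg r v = 0 → v = ρ) ∧
  (∀ v, v ≠ ρ → indeg r v + outdeg r v = 1 ∨ indeg r v + outdeg r v = 3) ∧
  {v | outdeg r v = 0} = Y ∧ (∀ v ∈ Y, indeg r v = 1)

/-- A rooted network is tree-based if it contains a spanning arborescence
rooted at `ρ` whose leaf set is `Y`. -/
def RootedTreeBased {α : Type*} (r : α → α → Prop) (ρ : α) (Y : Set α) : Prop :=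
  ∃ t : α → α → Prop, (∀ a b, t a b → r a b) ∧
    (∀ v, Relation.ReflTransGen t ρ v) ∧
    (∀ v, v ≠ ρ → indeg t v = 1) ∧ indeg t ρ = 0 ∧
    {v | outdeg t v = 0} = Y

/-- `T` is obtained from `T'` by suppressing all degree-2 vertices, via the
embedding `f` of the vertices of `T` into those of `T'`. -/
def Suppresses {A B : Type*} (T' : SimpleGraph A) (T : SimpleGraph B) (f : B → A) : Prop :=
  Function.Injective f ∧
  (∀ a : A, deg T' a ≠ 2 → a ∈ Set.range f) ∧
  (∀ b : B, deg T' (f b) ≠ 2) ∧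
  ∀ b b' : B, T.Adj b b' ↔
    ∃ p : T'.Walk (f b) (f b'), p.IsPath ∧
      ∀ a ∈ p.support, a ≠ f b → a ≠ f b' → deg T' a = 2

/-- `G` is fully tree-based on `X`: every subtree of `G` whose leaf set is `X`
is spanning (hence a support-tree). -/
def FullyTreeBased {W : Type*} (G : SimpleGraph W) (X : Set W) : Prop :=
  ∀ H : G.Subgraph, H.Connected → H.coe.IsAcyclic →
    {v | v ∈ H.verts ∧ (H.neighborSet v).ncard ≤ 1} = X → H.IsSpanning

/-!
Every edge of `N` either is a cut-edge or lies on a cycle, and a cycle lies in a single blob;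
moreover every cut-edge belongs to every spanning tree. So a support-tree `T` of `N` restricts
to a spanning tree of each `B_N`: paths of `T` between vertices of `B` cannot leave `B` (they would
have to cross a cut-edge twice), vertices of `B` lie on cycles and hence are not leaves of `N` or
of `T`, and the pendant vertices of `B_N` have a single neighbour there. Conversely, support-trees
of all the `B_N` glued along the cut-edges give a connected spanning subgraph of `N`; it is acyclic
because a cycle of it would lie in one blob `B` and hence in the support-tree of `B_N`, and a
vertex outside `X` keeps two neighbours, either inside its blob network or along cut-edges.
-/

section Degree

variable {W : Type*} {K L : SimpleGraph W}

lemma one_lt_deg_iff [Finite W] {v : W} :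
    1 < deg K v ↔ ∃ y, K.Adj v y ∧ ∃ z, K.Adj v z ∧ y ≠ z :=
  Set.one_lt_ncard

lemma deg_le_deg_of_injective {W' : Type*} {L' : SimpleGraph W'} [Finite W'] (f : K →g L')
    (hf : Function.Injective f) (v : W) : deg K v ≤ deg L' (f v) :=
  Set.ncard_le_ncard_of_injOn f (fun _ h => f.map_adj h) hf.injOn

lemma deg_mono [Finite W] (h : K ≤ L) (v : W) : deg K v ≤ deg L v :=
  deg_le_deg_of_injective (Hom.ofLE h) Function.injective_id v

lemma one_lt_deg_of_not_isBridge [Finite W] {u y : W} (h : K.Adj u y)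
    (hb : ¬ K.IsBridge s(u, y)) : 1 < deg K u := by
  obtain ⟨p, hp⟩ := reachable_deleteEdges_iff_exists_walk.1 (not_not.1 (isBridge_iff.not.1 hb))
  cases p with
  | nil => exact absurd rfl h.ne
  | @cons _ z _ h' q =>
    refine one_lt_deg_iff.2 ⟨y, h, z, h', fun hyz => hp ?_⟩
    simp [hyz]

end Degree

namespace SimpleGraph

variable {V : Type*} {G : SimpleGraph V}

lemma reachable_coe_iff_reachable_spanningCoe {H : G.Subgraph} {u v : H.verts} :
    H.coe.Reachable u v ↔ H.spanningCoe.Reachable u v := by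
  refine ⟨fun h => h.map ⟨Subtype.val, id⟩, fun ⟨p⟩ => ?_⟩
  suffices ∀ {a b : V} (p : H.spanningCoe.Walk a b) (ha : a ∈ H.verts) (hb : b ∈ H.verts),
      H.coe.Reachable ⟨a, ha⟩ ⟨b, hb⟩ from this p u.2 v.2
  intro a b p
  induction p with
  | nil => exact fun _ _ => .rfl
  | cons h _ ih =>
    intro ha hb
    have hw := H.edge_vert (H.adj_symm h)
    exact (Adj.reachable (show H.coe.Adj ⟨_, ha⟩ ⟨_, hw⟩ from h)).trans (ih hw hb)

lemma isBridge_coe_iff {H : G.Subgraph} {x y : H.verts} :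
    H.coe.IsBridge s(x, y) ↔ H.spanningCoe.IsBridge s(x.1, y.1) := by
  rw [isBridge_iff, isBridge_iff, Subgraph.deleteEdges_coe_eq, Set.image_singleton, Sym2.map_mk,
    Subgraph.deleteEdges_spanningCoe_eq]
  exact reachable_coe_iff_reachable_spanningCoe.not

end SimpleGraph

section Bridgeless

variable {V : Type*} {G : SimpleGraph V}

lemma bridgeless_coe_iff {H : G.Subgraph} :
    Bridgeless H.coe ↔ ∀ ⦃a b⦄, H.Adj a b → ¬ H.spanningCoe.IsBridge s(a, b) := by
  refine ⟨fun h a b hab hbr => ?_, fun h e ⟨he, hbr⟩ => ?_⟩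
  · exact h s(⟨a, H.edge_vert hab⟩, ⟨b, H.edge_vert hab.symm⟩) ⟨hab, isBridge_coe_iff.2 hbr⟩
  · induction e using Sym2.ind with
    | _ x y => exact h he (isBridge_coe_iff.1 hbr)

lemma Bridgeless.sup {H K : G.Subgraph} (hH : Bridgeless H.coe) (hK : Bridgeless K.coe) :
    Bridgeless (H ⊔ K).coe := by
  rw [bridgeless_coe_iff] at *
  rintro a b (hab | hab) hbr
  · exact hH hab (hbr.anti (Subgraph.spanningCoe_le_of_le le_sup_left))
  · exact hK hab (hbr.anti (Subgraph.spanningCoe_le_of_le le_sup_right))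

lemma SimpleGraph.Walk.IsCycle.bridgeless_toSubgraph {u : V} {c : G.Walk u u}
    (hc : c.IsCycle) : Bridgeless c.toSubgraph.coe := by
  rw [bridgeless_coe_iff]
  intro a b hab hbr
  have hsub : ∀ e ∈ c.edges, e ∈ c.toSubgraph.spanningCoe.edgeSet := fun e he => by
    simpa [Subgraph.edgeSet_spanningCoe] using c.mem_edges_toSubgraph.2 he
  exact hbr.notMem_edges_of_isCycle (hc.transfer hsub)
    (by rw [Walk.edges_transfer]; exact Walk.adj_toSubgraph_iff_mem_edges.1 hab)

end Bridgeless

section Blob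

variable {V : Type*} {G : SimpleGraph V}

lemma SimpleGraph.Subgraph.Connected.reachable_deleteEdges {H : G.Subgraph} (hH : H.Connected)
    {u v : V} (hu : u ∈ H.verts) (hv : v ∈ H.verts) {e : Sym2 V} (he : e ∉ H.edgeSet) :
    (G.deleteEdges {e}).Reachable u v := by
  obtain ⟨p, hp⟩ := (Subgraph.connected_iff_forall_exists_walk_subgraph H).1 hH |>.2 hu hv
  refine ⟨p.toDeleteEdges {e} fun e' he' he'e => he ?_⟩
  rw [Set.mem_singleton_iff] at he'e
  exact Subgraph.edgeSet_mono hp (p.mem_edges_toSubgraph.2 (he'e ▸ he'))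

lemma SimpleGraph.Subgraph.Connected.eq_of_isBridge {H : G.Subgraph} (hH : H.Connected)
    {u₁ u₂ w : V} (h₁ : u₁ ∈ H.verts) (h₂ : u₂ ∈ H.verts) (hw : w ∉ H.verts)
    (hb : G.IsBridge s(u₁, w)) (hadj : G.Adj u₂ w) : u₁ = u₂ := by
  by_contra hne
  have hwu₁ : w ≠ u₁ := fun h => hw (h ▸ h₁)
  refine hb ((hH.reachable_deleteEdges h₁ h₂ fun he => hw (H.edge_vert
    (H.adj_symm (Subgraph.mem_edgeSet.1 he)))).trans (Adj.reachable ?_))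
  simp [hadj, Ne.symm hne, hwu₁]

lemma isBlob_iff_maximal {B : G.Subgraph} :
    IsBlob G B ↔ Maximal (fun K : G.Subgraph => K.verts.Nontrivial ∧ K.Connected ∧
      Bridgeless K.coe) B :=
  ⟨fun ⟨h₁, h₂, h₃, h⟩ => ⟨⟨h₁, h₂, h₃⟩, fun K ⟨k₁, k₂, k₃⟩ hle => (h K k₁ k₂ k₃ hle).ge⟩,
    fun ⟨⟨h₁, h₂, h₃⟩, h⟩ =>
      ⟨h₁, h₂, h₃, fun _ k₁ k₂ k₃ hle => le_antisymm hle (h ⟨k₁, k₂, k₃⟩ hle)⟩⟩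

lemma exists_isBlob_le [Finite V] {H : G.Subgraph} (h₁ : H.verts.Nontrivial)
    (h₂ : H.Connected) (h₃ : Bridgeless H.coe) : ∃ B, IsBlob G B ∧ H ≤ B := by
  obtain ⟨B, hle, hB⟩ := Finite.exists_le_maximal
    (p := fun K : G.Subgraph => K.verts.Nontrivial ∧ K.Connected ∧ Bridgeless K.coe)
    ⟨h₁, h₂, h₃⟩
  exact ⟨B, isBlob_iff_maximal.2 hB, hle⟩

lemma SimpleGraph.Walk.IsCycle.exists_isBlob_toSubgraph_le [Finite V] {u : V}
    {c : G.Walk u u} (hc : c.IsCycle) : ∃ B, IsBlob G B ∧ c.toSubgraph ≤ B := by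
  have hadj := c.toSubgraph_adj_snd hc.not_nil
  refine exists_isBlob_le (H := c.toSubgraph) ⟨u, c.toSubgraph.edge_vert hadj, _,
    c.toSubgraph.edge_vert hadj.symm, (c.toSubgraph.adj_sub hadj).ne⟩ c.toSubgraph_connected
    hc.bridgeless_toSubgraph

lemma exists_isCycle_of_not_isBridge {u v : V} (h : G.Adj u v) (hb : ¬ G.IsBridge s(u, v)) :
    ∃ (x : V) (c : G.Walk x x), c.IsCycle ∧ c.toSubgraph.Adj u v := by
  obtain ⟨x, c, hc, he⟩ :=
    adj_and_reachable_delete_edges_iff_exists_cycle.1 ⟨h, not_not.1 (isBridge_iff.not.1 hb)⟩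
  exact ⟨x, c, hc, Walk.adj_toSubgraph_iff_mem_edges.2 he⟩

lemma exists_isBlob_adj_of_not_isBridge [Finite V] {u v : V} (h : G.Adj u v)
    (hb : ¬ G.IsBridge s(u, v)) : ∃ B, IsBlob G B ∧ B.Adj u v := by
  obtain ⟨x, c, hc, hadj⟩ := exists_isCycle_of_not_isBridge h hb
  obtain ⟨B, hB, hle⟩ := hc.exists_isBlob_toSubgraph_le
  exact ⟨B, hB, hle.2 hadj⟩

namespace IsBlob

variable {B : G.Subgraph}

lemma le_of_connected (hB : IsBlob G B) {H : G.Subgraph} (hH : H.Connected)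
    (hHb : Bridgeless H.coe) {v : V} (hvB : v ∈ B.verts) (hvH : v ∈ H.verts) : H ≤ B := by
  have := hB.2.2.2 (B ⊔ H) (hB.1.mono Set.subset_union_left)
    (Subgraph.connected_sup hB.2.1.preconnected hH.preconnected ⟨v, hvB, hvH⟩)
    (hB.2.2.1.sup hHb) le_sup_left
  exact this ▸ le_sup_right

lemma eq_of_mem (hB : IsBlob G B) {B' : G.Subgraph} (hB' : IsBlob G B') {v : V}
    (hv : v ∈ B.verts) (hv' : v ∈ B'.verts) : B = B' :=
  le_antisymm (hB'.le_of_connected hB.2.1 hB.2.2.1 hv' hv)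
    (hB.le_of_connected hB'.2.1 hB'.2.2.1 hv hv')

lemma not_isBridge (hB : IsBlob G B) {a b : V} (hab : B.Adj a b) : ¬ G.IsBridge s(a, b) :=
  fun hbr => bridgeless_coe_iff.1 hB.2.2.1 hab (hbr.anti B.spanningCoe_le)

lemma adj_of_not_isBridge (hB : IsBlob G B) {u w : V} (hu : u ∈ B.verts) (h : G.Adj u w)
    (hb : ¬ G.IsBridge s(u, w)) : B.Adj u w := by
  obtain ⟨x, c, hc, hadj⟩ := exists_isCycle_of_not_isBridge h hb
  exact (hB.le_of_connected c.toSubgraph_connected hc.bridgeless_toSubgraph hu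
    (c.toSubgraph.edge_vert hadj)).2 hadj

lemma isBridge_of_adj_of_notMem (hB : IsBlob G B) {u w : V} (hu : u ∈ B.verts)
    (hw : w ∉ B.verts) (h : G.Adj u w) : G.IsBridge s(u, w) := by
  by_contra hb
  exact hw (B.edge_vert (hB.adj_of_not_isBridge hu h hb).symm)

lemma adj_of_adj (hB : IsBlob G B) {u v : V} (hu : u ∈ B.verts) (hv : v ∈ B.verts)
    (h : G.Adj u v) : B.Adj u v := by
  by_contra hn
  exact hn (hB.adj_of_not_isBridge hu h fun hb =>
    hb (hB.2.1.reachable_deleteEdges hu hv (mt Subgraph.mem_edgeSet.1 hn)))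

lemma one_lt_deg [Finite V] (hB : IsBlob G B) {u : V} (hu : u ∈ B.verts) : 1 < deg G u := by
  have := hB.1.coe_sort
  obtain ⟨y, hy⟩ := hB.2.1.preconnected.exists_adj_of_nontrivial ⟨u, hu⟩
  exact one_lt_deg_of_not_isBridge (B.adj_sub hy) (hB.not_isBridge hy)

lemma support_subset_of_isPath (hB : IsBlob G B) {u v : V} (p : G.Walk u v) (hp : p.IsPath)
    (hu : u ∈ B.verts) (hv : v ∈ B.verts) : ∀ x ∈ p.support, x ∈ B.verts := by
  induction p with
  | nil => simpa using hu
  | @cons u w v h q ih =>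
    have hw : w ∈ B.verts := by
      by_contra hw
      -- `q` does not return to `u`, and `B` has no edge at `w`: together they bypass `s(u, w)`.
      refine hB.isBridge_of_adj_of_notMem hu hw h ((hB.2.1.reachable_deleteEdges hu hv ?_).trans
        ⟨(q.toDeleteEdges {s(u, w)} fun e he he' => ?_).reverse⟩)
      · exact fun he => hw (B.edge_vert (B.adj_symm (Subgraph.mem_edgeSet.1 he)))
      · rw [Set.mem_singleton_iff] at he'
        exact (Walk.cons_isPath_iff _ _).1 hp |>.2 (q.fst_mem_support_of_mem_edges (he' ▸ he))
    simp only [Walk.support_cons, List.mem_cons, forall_eq_or_imp]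
    exact ⟨hu, ih hp.of_cons hw hv⟩

end IsBlob

end Blob

section Restrict

variable {V : Type*} {G T : SimpleGraph V} {B : G.Subgraph}

lemma SimpleGraph.Connected.adj_of_isBridge (hT : T.Connected) (hle : T ≤ G) {u w : V}
    (hb : G.IsBridge s(u, w)) : T.Adj u w := by
  obtain ⟨p⟩ := hT u w
  exact p.adj_of_mem_edges
    (by simpa using isBridge_iff_forall_walk_mem_edges.1 hb (p.mapLe hle))

lemma IsBlob.blobNet_adj_of_adj (hB : IsBlob G B) {u y : V} (hu : u ∈ B.verts)
    (h : G.Adj u y) : (blobNet G B).Adj u y := by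
  by_cases hy : y ∈ B.verts
  · exact Or.inl (hB.adj_of_adj hu hy h)
  · exact Or.inr ⟨⟨h, hB.isBridge_of_adj_of_notMem hu hy h⟩, Or.inl hu⟩

lemma IsBlob.deg_blobNet_le_one [Finite V] (hB : IsBlob G B) {x : (blobNet G B).verts}
    (hx : x ∈ blobNetLeaves G B) : deg (blobNet G B).coe x ≤ 1 := by
  have key : ∀ {y : V}, (blobNet G B).Adj x y → y ∈ B.verts ∧ G.IsBridge s(y, x) := by
    rintro y (hxy | ⟨⟨-, hbr⟩, hxB | hyB⟩)
    · exact absurd (B.edge_vert hxy) hx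
    · exact absurd hxB hx
    · exact ⟨hyB, Sym2.eq_swap ▸ hbr⟩
  refine Set.ncard_le_one_iff_subsingleton.2 fun y₁ h₁ y₂ h₂ => Subtype.ext ?_
  obtain ⟨hy₁, hb₁⟩ := key h₁
  exact hB.2.1.eq_of_isBridge hy₁ (key h₂).1 hx hb₁ ((blobNet G B).adj_sub h₂).symm

def blobNetRestrict (G T : SimpleGraph V) (B : G.Subgraph) : SimpleGraph (blobNet G B).verts :=
  (blobNet G B).coe ⊓ T.comap Subtype.val

lemma connected_blobNetRestrict (hB : IsBlob G B) (hle : T ≤ G) (hT : T.Connected) :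
    (blobNetRestrict G T B).Connected := by
  have reach_of_mem : ∀ {u v : V} (hu : u ∈ B.verts) (hv : v ∈ B.verts),
      (blobNetRestrict G T B).Reachable ⟨u, Or.inl hu⟩ ⟨v, Or.inl hv⟩ := by
    intro u v hu hv
    obtain ⟨p, hp⟩ := (hT u v).exists_isPath
    have hs := hB.support_subset_of_isPath (p.mapLe hle) (hp.mapLe hle) hu hv
    rw [Walk.support_mapLe_eq_support] at hs
    let φ : T.induce B.verts →g blobNetRestrict G T B :=
      ⟨fun x => ⟨x, Or.inl x.2⟩, fun {x y} h => ⟨Or.inl (hB.adj_of_adj x.2 y.2 (hle h)), h⟩⟩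
    exact ⟨(p.induce B.verts hs).map φ⟩
  have reach_mem : ∀ x : (blobNet G B).verts, ∃ (u : V) (hu : u ∈ B.verts),
      (blobNetRestrict G T B).Reachable x ⟨u, Or.inl hu⟩ := by
    rintro ⟨x, hx | ⟨u, hu, hbr⟩⟩
    · exact ⟨x, hx, .rfl⟩
    · exact ⟨u, hu, Adj.reachable ⟨Or.inr ⟨Sym2.eq_swap ▸ hbr, Or.inr hu⟩,
        (hT.adj_of_isBridge hle hbr.2).symm⟩⟩
  obtain ⟨v, hv⟩ := hB.1.nonempty
  refine (connected_iff _).2 ⟨fun x y => ?_, ⟨⟨v, Or.inl hv⟩⟩⟩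
  obtain ⟨u, hu, hxu⟩ := reach_mem x
  obtain ⟨w, hw, hyw⟩ := reach_mem y
  exact hxu.trans ((reach_of_mem hu hw).trans hyw.symm)

lemma IsSupportTree.isSupportTree_blobNetRestrict [Finite V] {X : Set V}
    (hT : IsSupportTree G T X) (hX : X ⊆ {v | deg G v ≤ 1}) (hB : IsBlob G B) :
    IsSupportTree (blobNet G B).coe (blobNetRestrict G T B) (blobNetLeaves G B) := by
  obtain ⟨hle, htree, hleaves⟩ := hT
  refine ⟨inf_le_left, ⟨connected_blobNetRestrict hB hle htree.connected,
    htree.isAcyclic.comap ⟨Subtype.val, fun h => h.2⟩ Subtype.val_injective⟩, ?_⟩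
  ext x
  refine ⟨fun hx hxB => ?_, fun hx => (deg_mono inf_le_left x).trans (hB.deg_blobNet_le_one hx)⟩
  have hxX : x.1 ∉ X := fun h => (hB.one_lt_deg hxB).not_ge (hX h)
  obtain ⟨y, hy, z, hz, hyz⟩ := one_lt_deg_iff.1 (not_le.1 fun h => hxX (hleaves.subset h))
  have hyN := hB.blobNet_adj_of_adj hxB (hle hy)
  have hzN := hB.blobNet_adj_of_adj hxB (hle hz)
  refine (one_lt_deg_iff (K := blobNetRestrict G T B) |>.2 ⟨⟨y, (blobNet G B).edge_vert hyN.symm⟩,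
    ⟨hyN, hy⟩, ⟨z, (blobNet G B).edge_vert hzN.symm⟩, ⟨hzN, hz⟩, ?_⟩).not_ge hx
  simpa using hyz

end Restrict

section Glue

variable {V : Type*} {G : SimpleGraph V}
  {t : ∀ B : G.Subgraph, IsBlob G B → SimpleGraph (blobNet G B).verts}

def gluedTree (G : SimpleGraph V)
    (t : ∀ B : G.Subgraph, IsBlob G B → SimpleGraph (blobNet G B).verts) : SimpleGraph V where
  Adj a b := G.IsBridge' s(a, b) ∨ ∃ B, ∃ hB : IsBlob G B,
    ∃ (ha : a ∈ (blobNet G B).verts) (hb : b ∈ (blobNet G B).verts), (t B hB).Adj ⟨a, ha⟩ ⟨b, hb⟩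
  symm := ⟨by
    rintro a b (h | ⟨B, hB, ha, hb, h⟩)
    · exact Or.inl (Sym2.eq_swap ▸ h)
    · exact Or.inr ⟨B, hB, hb, ha, h.symm⟩⟩
  loopless := ⟨by
    rintro a (h | ⟨B, hB, _, _, h⟩)
    · exact h.1.ne rfl
    · exact h.ne rfl⟩

def toGluedTree (B : G.Subgraph) (hB : IsBlob G B) : t B hB →g gluedTree G t :=
  ⟨Subtype.val, fun h => Or.inr ⟨B, hB, _, _, h⟩⟩

lemma gluedTree_le (hle : ∀ B hB, t B hB ≤ (blobNet G B).coe) : gluedTree G t ≤ G := by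
  rintro a b (h | ⟨B, hB, _, _, h⟩)
  · exact h.1
  · exact (blobNet G B).adj_sub (hle B hB h)

lemma connected_gluedTree [Finite V] (hG : G.Connected) (ht : ∀ B hB, (t B hB).Connected) :
    (gluedTree G t).Connected := by
  have reach_of_adj : ∀ {a b : V}, G.Adj a b → (gluedTree G t).Reachable a b := by
    intro a b h
    by_cases hb : G.IsBridge s(a, b)
    · exact Adj.reachable (Or.inl ⟨h, hb⟩)
    · obtain ⟨B, hB, hab⟩ := exists_isBlob_adj_of_not_isBridge h hb
      exact ((ht B hB).preconnected ⟨a, Or.inl (B.edge_vert hab)⟩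
        ⟨b, Or.inl (B.edge_vert hab.symm)⟩).map (toGluedTree B hB)
  refine (connected_iff _).2 ⟨fun x y => ?_, hG.nonempty⟩
  obtain ⟨p⟩ := hG x y
  induction p with
  | nil => rfl
  | cons h _ ih => exact (reach_of_adj h).trans ih

lemma gluedTree_adj_of_mem (hle : ∀ B hB, t B hB ≤ (blobNet G B).coe) {B : G.Subgraph}
    (hB : IsBlob G B) {a b : V} (ha : a ∈ B.verts) (hb : b ∈ B.verts)
    (h : (gluedTree G t).Adj a b) : (t B hB).Adj ⟨a, Or.inl ha⟩ ⟨b, Or.inl hb⟩ := by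
  have hnb : ¬ G.IsBridge s(a, b) := hB.not_isBridge (hB.adj_of_adj ha hb (gluedTree_le hle h))
  rcases h with h | ⟨B', hB', _, _, h⟩
  · exact absurd h.2 hnb
  · rcases hle B' hB' h with hB'ab | ⟨hbr, -⟩
    · obtain rfl := hB'.eq_of_mem hB (B'.edge_vert hB'ab) ha
      exact h
    · exact absurd hbr.2 hnb

lemma isAcyclic_gluedTree [Finite V] (hle : ∀ B hB, t B hB ≤ (blobNet G B).coe)
    (hacyc : ∀ B hB, (t B hB).IsAcyclic) : (gluedTree G t).IsAcyclic := by
  intro v c hc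
  -- As a cycle of `G`, `c` lies in one blob `B`, where `gluedTree G t` is a subgraph of `t B hB`.
  obtain ⟨B, hB, hcB⟩ := (hc.mapLe (gluedTree_le hle)).exists_isBlob_toSubgraph_le
  have hs : ∀ x ∈ c.support, x ∈ B.verts := fun x hx => hcB.1 (by simpa using hx)
  have hc' : (c.induce B.verts hs).IsCycle := by
    rwa [← Walk.isCycle_map_iff_of_injective (f := (Embedding.induce B.verts).toHom)
      Subtype.val_injective, Walk.map_induce]
  let φ : (gluedTree G t).induce B.verts →g t B hB :=
    ⟨fun x => ⟨x, Or.inl x.2⟩, fun {x y} h => gluedTree_adj_of_mem hle hB x.2 y.2 h⟩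
  have hφ : Function.Injective φ := fun x y h =>
    Subtype.ext (congrArg (Subtype.val : (blobNet G B).verts → V) h)
  exact (hacyc B hB).comap φ hφ _ hc'

lemma setOf_deg_gluedTree_le_one [Finite V] {X : Set V} (hX : {v | deg G v ≤ 1} = X)
    (ht : ∀ B hB, IsSupportTree (blobNet G B).coe (t B hB) (blobNetLeaves G B)) :
    {v | deg (gluedTree G t) v ≤ 1} = X := by
  subst hX
  ext v
  refine ⟨fun hv => ?_, fun hv => (deg_mono (gluedTree_le fun B hB => (ht B hB).1) v).trans hv⟩
  by_contra hGv
  suffices 1 < deg (gluedTree G t) v from this.not_ge hv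
  by_cases hvB : ∃ B, ∃ hB : IsBlob G B, v ∈ B.verts
  · obtain ⟨B, hB, hv⟩ := hvB
    have h1 : 1 < deg (t B hB) ⟨v, Or.inl hv⟩ :=
      not_le.1 fun h => (ht B hB).2.2.subset h hv
    exact h1.trans_le (deg_le_deg_of_injective (toGluedTree B hB) Subtype.val_injective _)
  · have hadj : ∀ {w}, G.Adj v w → (gluedTree G t).Adj v w := fun {w} h => by
      refine Or.inl ⟨h, by_contra fun hb => ?_⟩
      obtain ⟨B, hB, hvw⟩ := exists_isBlob_adj_of_not_isBridge h hb
      exact hvB ⟨B, hB, B.edge_vert hvw⟩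
    obtain ⟨y, hy, z, hz, hyz⟩ := one_lt_deg_iff.1 (not_le.1 hGv)
    exact one_lt_deg_iff.2 ⟨y, hadj hy, z, hadj hz, hyz⟩

lemma isSupportTree_gluedTree [Finite V] {X : Set V} (hG : G.Connected)
    (hX : {v | deg G v ≤ 1} = X)
    (ht : ∀ B hB, IsSupportTree (blobNet G B).coe (t B hB) (blobNetLeaves G B)) :
    IsSupportTree G (gluedTree G t) X :=
  ⟨gluedTree_le fun B hB => (ht B hB).1,
    ⟨connected_gluedTree hG fun B hB => (ht B hB).2.1.connected,
      isAcyclic_gluedTree (fun B hB => (ht B hB).1) fun B hB => (ht B hB).2.1.isAcyclic⟩,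
    setOf_deg_gluedTree_le_one hX ht⟩

end Glue

/-- A network `G` on `X` is tree-based iff `B_N` is tree-based for every blob `B`. -/
theorem stmt0 {V : Type*} [Fintype V] (G : SimpleGraph V) (X : Set V)
    (hN : IsNetwork G X) :
    TreeBased G X ↔
      ∀ B : G.Subgraph, IsBlob G B →
        TreeBased (blobNet G B).coe (blobNetLeaves G B) := by
  obtain ⟨hG, -, hX⟩ := hN
  refine ⟨fun ⟨T, hT⟩ B hB => ⟨_, hT.isSupportTree_blobNetRestrict hX.symm.subset hB⟩, fun h => ?_⟩
  choose t ht using h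
  exact ⟨_, isSupportTree_gluedTree hG hX ht⟩
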